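/- Assume H is ℓ¹-Lipschitz in p with constant L, Lipschitz in u with constant L_u, and nondecreasing in u, and assume β ≥ L/2. Let τ > 0 satisfy τ·(θ + L_u + 2β Σ_{i=1}^d 1/h_i) ≤ 1, and define the map M_τ on grid functions by (M_τ V)_α = V_α − τ Ĥ_LF[V]_α at every interior index α and (M_τ V)_α = g(x_α) at every boundary index α. Then M_τ is order-preserving: if V_α ≤ W_α for all grid indices α, then (M_τ V)_α ≤ (M_τ W)_α for all grid indices α. -/
import Mathlib


open Finset

/-- `α` is an interior index: `0 < α i < J i` for all `i`. -/
def isInterior {d : ℕ} (J : Fin d → ℤ) (α : Fin d → ℤ) : Prop :=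
  ∀ i, 0 < α i ∧ α i < J i

/-- `α` is a grid index: `0 ≤ α i ≤ J i` for all `i`. -/
def isGrid {d : ℕ} (J : Fin d → ℤ) (α : Fin d → ℤ) : Prop :=
  ∀ i, 0 ≤ α i ∧ α i ≤ J i

/-- `α` is a boundary index: a grid index with `α i ∈ {0, J i}` for some `i`. -/
def isBoundary {d : ℕ} (J : Fin d → ℤ) (α : Fin d → ℤ) : Prop :=
  isGrid J α ∧ ∃ i, α i = 0 ∨ α i = J i

instance {d : ℕ} (J α : Fin d → ℤ) : Decidable (isInterior J α) :=
  inferInstanceAs (Decidable (∀ i, 0 < α i ∧ α i < J i))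

instance {d : ℕ} (J α : Fin d → ℤ) : Decidable (isGrid J α) :=
  inferInstanceAs (Decidable (∀ i, 0 ≤ α i ∧ α i ≤ J i))

/-- The grid node `x_α = a + (α₁h₁, …, α_dh_d)`. -/
noncomputable def xpt {d : ℕ} (a h : Fin d → ℝ) (α : Fin d → ℤ) : Fin d → ℝ :=
  fun i => a i + (α i : ℝ) * h i

/-- Second central difference `δᵢ² U_α = (U_{α+eᵢ} − 2U_α + U_{α−eᵢ})/hᵢ²`. -/
noncomputable def delta2 {d : ℕ} (h : Fin d → ℝ) (U : (Fin d → ℤ) → ℝ) (i : Fin d)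
    (α : Fin d → ℤ) : ℝ :=
  (U (α + Pi.single i 1) - 2 * U α + U (α - Pi.single i 1)) / (h i) ^ 2

/-- Central discrete gradient `∇_h U_α`. -/
noncomputable def gradh {d : ℕ} (h : Fin d → ℝ) (U : (Fin d → ℤ) → ℝ) (α : Fin d → ℤ) :
    Fin d → ℝ :=
  fun i => (U (α + Pi.single i 1) - U (α - Pi.single i 1)) / (2 * h i)

/-- Lax-Friedrichs operator
`Ĥ_LF[U]_α = −β Σᵢ hᵢ δᵢ² U_α + H(∇_h U_α, U_α, x_α) + θ U_α`. -/
noncomputable def HLF {d : ℕ} (h : Fin d → ℝ) (H : (Fin d → ℝ) → ℝ → (Fin d → ℝ) → ℝ)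
    (θ β : ℝ) (a : Fin d → ℝ) (U : (Fin d → ℤ) → ℝ) (α : Fin d → ℤ) : ℝ :=
  -β * (∑ i, h i * delta2 h U i α) + H (gradh h U α) (U α) (xpt a h α) + θ * U α

/-- Monotonicity of the pseudo-timestep map `M_τ` for the Lax-Friedrichs scheme:
if `H` is ℓ¹-Lipschitz in `p` with constant `L`, Lipschitz in `u` with constant
`L_u`, nondecreasing in `u`, `β ≥ L/2`, and `τ (θ + L_u + 2β Σᵢ 1/hᵢ) ≤ 1`, then
`M_τ` is order-preserving on grid functions. -/
lemma lf_aux (β L hi Wp Wm W0 Vp Vm V0 : ℝ) (hhi : 0 < hi) (hL : 0 ≤ L) (hβ : L / 2 ≤ β)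
    (hP : 0 ≤ Wp - Vp) (hQ : 0 ≤ Wm - Vm) :
    -β * (hi * ((Wp - 2 * W0 + Wm) / hi ^ 2)) - -β * (hi * ((Vp - 2 * V0 + Vm) / hi ^ 2))
      + L * |(Wp - Wm) / (2 * hi) - (Vp - Vm) / (2 * hi)|
      ≤ 2 * β * (1 / hi) * (W0 - V0) := by
  have hc : 0 < 1 / hi := by positivity
  have hne : hi ≠ 0 := hhi.ne'
  have e1 : -β * (hi * ((Wp - 2 * W0 + Wm) / hi ^ 2)) - -β * (hi * ((Vp - 2 * V0 + Vm) / hi ^ 2))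
      = -β * ((Wp - Vp) + (Wm - Vm) - 2 * (W0 - V0)) * (1 / hi) := by
    field_simp; ring
  have e3 : (Wp - Wm) / (2 * hi) - (Vp - Vm) / (2 * hi)
      = ((Wp - Vp) - (Wm - Vm)) * (1 / hi) / 2 := by
    field_simp; ring
  have habs : |(Wp - Vp) - (Wm - Vm)| ≤ (Wp - Vp) + (Wm - Vm) := by
    rcases abs_cases ((Wp - Vp) - (Wm - Vm)) with ⟨he, _⟩ | ⟨he, _⟩ <;> linarith
  have e4 : |((Wp - Vp) - (Wm - Vm)) * (1 / hi) / 2| = |(Wp - Vp) - (Wm - Vm)| * (1 / hi) / 2 := by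
    rw [abs_div, abs_mul, abs_of_pos hc, abs_two]
  rw [e1, e3, e4]
  have k1 : 0 ≤ L * ((Wp - Vp) + (Wm - Vm) - |(Wp - Vp) - (Wm - Vm)|) * (1 / hi) :=
    mul_nonneg (mul_nonneg hL (by linarith)) hc.le
  have k2 : 0 ≤ (β - L / 2) * ((Wp - Vp) + (Wm - Vm)) * (1 / hi) :=
    mul_nonneg (mul_nonneg (by linarith) (by linarith)) hc.le
  nlinarith [k1, k2]

theorem lax_friedrichs_map_monotone {d : ℕ} (hd : 0 < d)
    (J : Fin d → ℤ) (hJ : ∀ i, 2 ≤ J i)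
    (h : Fin d → ℝ) (hh : ∀ i, 0 < h i) (a : Fin d → ℝ)
    (H : (Fin d → ℝ) → ℝ → (Fin d → ℝ) → ℝ)
    (θ : ℝ) (hθ : 0 < θ) (β : ℝ) (g : (Fin d → ℝ) → ℝ)
    (L Lu : ℝ)
    (hLip : ∀ (p q : Fin d → ℝ) (v : ℝ) (x : Fin d → ℝ),
      |H p v x - H q v x| ≤ L * ∑ i, |p i - q i|)
    (hLipu : ∀ (p : Fin d → ℝ) (v w : ℝ) (x : Fin d → ℝ),
      |H p v x - H p w x| ≤ Lu * |v - w|)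
    (hmono : ∀ (p : Fin d → ℝ) (x : Fin d → ℝ), Monotone fun v => H p v x)
    (hβ : L / 2 ≤ β)
    (τ : ℝ) (hτ : 0 < τ)
    (hτ2 : τ * (θ + Lu + 2 * β * ∑ i, 1 / h i) ≤ 1)
    (V W : (Fin d → ℤ) → ℝ)
    (hVW : ∀ α, isGrid J α → V α ≤ W α) :
    let M : ((Fin d → ℤ) → ℝ) → (Fin d → ℤ) → ℝ := fun U α =>
      if isInterior J α then U α - τ * HLF h H θ β a U α else g (xpt a h α)
    ∀ α, isGrid J α → M V α ≤ M W α := by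
  -- L is nonnegative
  have hL : 0 ≤ L := by
    obtain ⟨i0⟩ : Nonempty (Fin d) := Fin.pos_iff_nonempty.mp hd
    have h1 := hLip (Pi.single i0 1) 0 0 0
    have h2 : ∑ i, |(Pi.single i0 1 : Fin d → ℝ) i - (0 : Fin d → ℝ) i| = 1 := by
      simp only [Pi.single_apply, Pi.zero_apply, sub_zero, apply_ite abs, abs_one, abs_zero]
      rw [Finset.sum_ite_eq' Finset.univ i0 (fun _ => (1:ℝ))]
      simp
    rw [h2, mul_one] at h1
    exact le_trans (abs_nonneg _) h1
  intro M α hα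
  by_cases hint : isInterior J α
  · have hgrid : isGrid J α := fun i => ⟨(hint i).1.le, (hint i).2.le⟩
    have hgp : ∀ i : Fin d, isGrid J (α + Pi.single i 1) := by
      intro i j
      rcases eq_or_ne j i with rfl | hji
      · have := hint j
        simp only [Pi.add_apply, Pi.single_eq_same]
        omega
      · have := hint j
        simp only [Pi.add_apply, Pi.single_eq_of_ne hji, add_zero]
        omega
    have hgm : ∀ i : Fin d, isGrid J (α - Pi.single i 1) := by
      intro i j
      rcases eq_or_ne j i with rfl | hji
      · have := hint j
        simp only [Pi.sub_apply, Pi.single_eq_same]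
        omega
      · have := hint j
        simp only [Pi.sub_apply, Pi.single_eq_of_ne hji, sub_zero]
        omega
    have hD0 : 0 ≤ W α - V α := sub_nonneg.mpr (hVW α hgrid)
    -- bound on the Hamiltonian difference
    have hΔH : H (gradh h W α) (W α) (xpt a h α) - H (gradh h V α) (V α) (xpt a h α)
        ≤ L * ∑ i, |gradh h W α i - gradh h V α i| + Lu * (W α - V α) := by
      have h1 : H (gradh h W α) (W α) (xpt a h α) - H (gradh h V α) (W α) (xpt a h α)
          ≤ L * ∑ i, |gradh h W α i - gradh h V α i| :=
        (le_abs_self _).trans (hLip _ _ _ _)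
      have h2 : H (gradh h V α) (W α) (xpt a h α) - H (gradh h V α) (V α) (xpt a h α)
          ≤ Lu * (W α - V α) := by
        have := (le_abs_self _).trans (hLipu (gradh h V α) (W α) (V α) (xpt a h α))
        rwa [abs_of_nonneg hD0] at this
      linarith
    -- bound on diffusion + gradient Lipschitz sum
    have hsum : -β * (∑ i, h i * delta2 h W i α) - -β * (∑ i, h i * delta2 h V i α)
        + L * ∑ i, |gradh h W α i - gradh h V α i|
        ≤ 2 * β * (∑ i, 1 / h i) * (W α - V α) := by
      calc -β * (∑ i, h i * delta2 h W i α) - -β * (∑ i, h i * delta2 h V i α)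
            + L * ∑ i, |gradh h W α i - gradh h V α i|
          = ∑ i, (-β * (h i * delta2 h W i α) - -β * (h i * delta2 h V i α)
              + L * |gradh h W α i - gradh h V α i|) := by
            rw [Finset.mul_sum, Finset.mul_sum, Finset.mul_sum,
              ← Finset.sum_sub_distrib, ← Finset.sum_add_distrib]
        _ ≤ ∑ i : Fin d, 2 * β * (1 / h i) * (W α - V α) := by
            apply Finset.sum_le_sum
            intro i _
            simp only [delta2, gradh]
            exact lf_aux β L (h i) _ _ _ _ _ _ (hh i) hL hβ
              (sub_nonneg.mpr (hVW _ (hgp i))) (sub_nonneg.mpr (hVW _ (hgm i)))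
        _ = 2 * β * (∑ i, 1 / h i) * (W α - V α) := by
            rw [Finset.mul_sum, Finset.sum_mul]
    have key : HLF h H θ β a W α - HLF h H θ β a V α
        ≤ (θ + Lu + 2 * β * ∑ i, 1 / h i) * (W α - V α) := by
      simp only [HLF]
      have hexp : (θ + Lu + 2 * β * ∑ i, 1 / h i) * (W α - V α)
          = θ * (W α - V α) + Lu * (W α - V α) + 2 * β * (∑ i, 1 / h i) * (W α - V α) := by
        ring
      rw [hexp]
      linarith [hΔH, hsum]
    have hfin : τ * (HLF h H θ β a W α - HLF h H θ β a V α) ≤ W α - V α :=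
      calc τ * (HLF h H θ β a W α - HLF h H θ β a V α)
          ≤ τ * ((θ + Lu + 2 * β * ∑ i, 1 / h i) * (W α - V α)) :=
            mul_le_mul_of_nonneg_left key hτ.le
        _ = (τ * (θ + Lu + 2 * β * ∑ i, 1 / h i)) * (W α - V α) := by ring
        _ ≤ 1 * (W α - V α) := mul_le_mul_of_nonneg_right hτ2 hD0
        _ = W α - V α := one_mul _
    simp only [M, if_pos hint]
    linarith
  · simp only [M, if_neg hint]; exact le_refl _
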